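/- arXiv:1911.11332 — 2 statements merged into one kernel-verified Lean document; each statement's English description precedes it below -/
import Mathlib

section
/- Let w : [0,∞) → ℝ be a bounded continuous nonnegative function with ‖w‖_∞ > 0, let δ > 0, let 0 < ζ < 1, and set Δ = ζ·δ/(2‖w‖_∞). Let t₀ < t₁ and let μ, η : [t₀, t₁] → (finite nonnegative Borel measures on [0,∞)) be continuous with respect to the total variation norm and satisfy ∫ w dμ(s) ≥ δ and ∫ w dη(s) ≥ δ for all s ∈ [t₀, t₁]. Then for every continuously differentiable g : [0,∞) → ℝ with ‖g‖_∞ ≤ 1 and ‖g'‖_∞ ≤ 1, and every t ∈ [t₀, min(t₁, t₀ + Δ)], one has |∫_{t₀}^t [ (∫ g'·w dμ(s))/(∫ w dμ(s)) − (∫ g'·w dη(s))/(∫ w dη(s)) ] ds| ≤ ζ · sup_{s ∈ [t₀, t₁]} ‖μ(s) − η(s)‖_TV. In particular the Picard iteration map for the fluid model contracts the pairing against every such test function by the factor ζ on time intervals of length at most Δ, a bound independent of t₀. -/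
open MeasureTheory

/-- The total variation norm `‖μ - η‖_TV` of the difference of two finite measures. -/
noncomputable def tvNorm (μ η : Measure ℝ) [IsFiniteMeasure μ] [IsFiniteMeasure η] : ℝ :=
  ((μ.toSignedMeasure - η.toSignedMeasure).totalVariation Set.univ).toReal

/-- The supremum norm `‖f‖_∞` of a real-valued function. -/
noncomputable def supNorm (f : ℝ → ℝ) : ℝ := ⨆ x, |f x|

/-!
Fix `s`. Writing the integrand as `A/B - C/D` with `B, D ≥ δ`, the identity
`A/B - C/D = (A - C)/B + (C/D) (D - B)/B` together with `|C| ≤ D` (as `|g'| ≤ 1` and `w ≥ 0`)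
and `|A - C|, |D - B| ≤ ‖w‖_∞ ‖μ(s) - η(s)‖_TV` bounds it by `2 ‖w‖_∞ M / δ`, where `M` is the
supremum of the total variation distances. Integrating over an interval of length at most `Δ`
gives `ζ M`. The supremum is a genuine upper bound because `s ↦ ‖μ(s) - η(s)‖_TV` is
continuous on the compact interval `[t₀, t₁]`, hence bounded.
-/

namespace MeasureTheory.Measure

variable {α : Type*} [MeasurableSpace α]

lemma add_negPart_eq_add_posPart (μ ν : Measure α) [IsFiniteMeasure μ]
    [IsFiniteMeasure ν] :
    μ + (μ.toSignedMeasure - ν.toSignedMeasure).toJordanDecomposition.negPart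
      = ν + (μ.toSignedMeasure - ν.toSignedMeasure).toJordanDecomposition.posPart := by
  have hspec := (μ.toSignedMeasure - ν.toSignedMeasure).toSignedMeasure_toJordanDecomposition
  rw [JordanDecomposition.toSignedMeasure] at hspec
  rw [← toSignedMeasure_eq_toSignedMeasure_iff, toSignedMeasure_add, toSignedMeasure_add]
  exact (sub_eq_sub_iff_add_eq_add.mp hspec).symm.trans (add_comm _ _)

lemma variation_sub_toSignedMeasure_ne_top (μ ν : Measure α) [IsFiniteMeasure μ]
    [IsFiniteMeasure ν] (s : Set α) :
    (μ.toSignedMeasure - ν.toSignedMeasure).variation s ≠ ⊤ := by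
  refine ne_top_of_le_ne_top ?_ (VectorMeasure.variation_sub_le s)
  simp only [variation_toSignedMeasure, add_apply]
  exact ENNReal.add_ne_top.mpr ⟨measure_ne_top _ _, measure_ne_top _ _⟩

end MeasureTheory.Measure

section TVNorm

variable (μ ν ρ : Measure ℝ) [IsFiniteMeasure μ] [IsFiniteMeasure ν] [IsFiniteMeasure ρ]

lemma tvNorm_nonneg : 0 ≤ tvNorm μ ν := ENNReal.toReal_nonneg

lemma tvNorm_comm : tvNorm μ ν = tvNorm ν μ := by
  rw [tvNorm, tvNorm, ← neg_sub μ.toSignedMeasure, SignedMeasure.totalVariation_neg]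

lemma tvNorm_triangle : tvNorm μ ρ ≤ tvNorm μ ν + tvNorm ν ρ := by
  simp only [tvNorm, SignedMeasure.totalVariation_eq_variation]
  rw [← ENNReal.toReal_add (Measure.variation_sub_toSignedMeasure_ne_top _ _ _)
    (Measure.variation_sub_toSignedMeasure_ne_top _ _ _)]
  refine ENNReal.toReal_mono (ENNReal.add_ne_top.mpr
    ⟨Measure.variation_sub_toSignedMeasure_ne_top _ _ _,
      Measure.variation_sub_toSignedMeasure_ne_top _ _ _⟩) ?_
  have hsplit : μ.toSignedMeasure - ρ.toSignedMeasure
      = (μ.toSignedMeasure - ν.toSignedMeasure) + (ν.toSignedMeasure - ρ.toSignedMeasure) := by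
    abel
  rw [hsplit]
  exact VectorMeasure.variation_add_le Set.univ

lemma abs_tvNorm_sub_tvNorm_le (μ' ν' : Measure ℝ) [IsFiniteMeasure μ'] [IsFiniteMeasure ν'] :
    |tvNorm μ ν - tvNorm μ' ν'| ≤ tvNorm μ μ' + tvNorm ν ν' := by
  have h₁ := tvNorm_triangle μ μ' ν
  have h₂ := tvNorm_triangle μ' ν' ν
  have h₃ := tvNorm_triangle μ' μ ν'
  have h₄ := tvNorm_triangle μ ν ν'
  rw [tvNorm_comm ν' ν] at h₂
  rw [tvNorm_comm μ' μ] at h₃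
  rw [abs_sub_le_iff]
  constructor <;> linarith

lemma abs_integral_sub_le_mul_tvNorm {f : ℝ → ℝ} (hf : Measurable f) {K : ℝ}
    (hK : ∀ x, |f x| ≤ K) :
    |∫ x, f x ∂μ - ∫ x, f x ∂ν| ≤ K * tvNorm μ ν := by
  set P := (μ.toSignedMeasure - ν.toSignedMeasure).toJordanDecomposition.posPart
  set N := (μ.toSignedMeasure - ν.toSignedMeasure).toJordanDecomposition.negPart
  have hK' : ∀ (m : Measure ℝ), ∀ᵐ x ∂m, ‖f x‖ ≤ K := fun m =>
    Filter.Eventually.of_forall hK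
  have hint : ∀ (m : Measure ℝ) [IsFiniteMeasure m], Integrable f m := fun m _ =>
    Integrable.of_bound hf.aestronglyMeasurable K (hK' m)
  have hjordan : ∫ x, f x ∂μ - ∫ x, f x ∂ν = ∫ x, f x ∂P - ∫ x, f x ∂N := by
    have := congrArg (fun m => ∫ x, f x ∂m) (Measure.add_negPart_eq_add_posPart μ ν)
    simp only [integral_add_measure (hint _) (hint _)] at this
    linarith
  have htv : tvNorm μ ν = P.real Set.univ + N.real Set.univ := by
    rw [tvNorm, SignedMeasure.totalVariation, ← measureReal_add_apply]
    rfl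
  calc |∫ x, f x ∂μ - ∫ x, f x ∂ν|
      = |∫ x, f x ∂P - ∫ x, f x ∂N| := by rw [hjordan]
    _ ≤ ‖∫ x, f x ∂P‖ + ‖∫ x, f x ∂N‖ := abs_sub _ _
    _ ≤ K * P.real Set.univ + K * N.real Set.univ :=
      add_le_add (norm_integral_le_of_norm_le_const (hK' P))
        (norm_integral_le_of_norm_le_const (hK' N))
    _ = K * tvNorm μ ν := by rw [htv, mul_add]

end TVNorm

lemma continuousOn_tvNorm {S : Set ℝ} {μ η : ℝ → Measure ℝ} [∀ s, IsFiniteMeasure (μ s)]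
    [∀ s, IsFiniteMeasure (η s)]
    (hμ : ∀ s ∈ S, ∀ ε > (0:ℝ), ∃ ρ > (0:ℝ), ∀ s' ∈ S, |s' - s| < ρ → tvNorm (μ s) (μ s') < ε)
    (hη : ∀ s ∈ S, ∀ ε > (0:ℝ), ∃ ρ > (0:ℝ), ∀ s' ∈ S, |s' - s| < ρ → tvNorm (η s) (η s') < ε) :
    ContinuousOn (fun s => tvNorm (μ s) (η s)) S := by
  rw [Metric.continuousOn_iff]
  intro s hs ε hε
  obtain ⟨ρ₁, hρ₁, h₁⟩ := hμ s hs (ε / 2) (half_pos hε)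
  obtain ⟨ρ₂, hρ₂, h₂⟩ := hη s hs (ε / 2) (half_pos hε)
  refine ⟨min ρ₁ ρ₂, lt_min hρ₁ hρ₂, fun s' hs' hdist => ?_⟩
  rw [Real.dist_eq] at hdist ⊢
  calc |tvNorm (μ s') (η s') - tvNorm (μ s) (η s)|
      = |tvNorm (μ s) (η s) - tvNorm (μ s') (η s')| := abs_sub_comm _ _
    _ ≤ tvNorm (μ s) (μ s') + tvNorm (η s) (η s') := abs_tvNorm_sub_tvNorm_le _ _ _ _
    _ < ε / 2 + ε / 2 := add_lt_add (h₁ s' hs' (hdist.trans_le (min_le_left _ _)))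
        (h₂ s' hs' (hdist.trans_le (min_le_right _ _)))
    _ = ε := add_halves ε

lemma abs_le_supNorm {f : ℝ → ℝ} (hf : ∃ C, ∀ x, |f x| ≤ C) (x : ℝ) : |f x| ≤ supNorm f := by
  obtain ⟨C, hC⟩ := hf
  exact le_ciSup (f := fun x => |f x|) ⟨C, Set.forall_mem_range.2 hC⟩ x

lemma abs_div_sub_div_le {a b c d δ ε : ℝ} (hδ : 0 < δ) (hb : δ ≤ b) (hd : 0 < d)
    (hcd : |c| ≤ d) (hac : |a - c| ≤ ε) (hdb : |d - b| ≤ ε) :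
    |a / b - c / d| ≤ 2 * ε / δ := by
  have hb₀ : 0 < b := hδ.trans_le hb
  have hε : 0 ≤ ε := (abs_nonneg _).trans hac
  have hcd' : |c / d| ≤ 1 := by
    rw [abs_div, abs_of_pos hd]
    exact div_le_one_of_le₀ hcd hd.le
  calc |a / b - c / d| = |(a - c) / b + c / d * ((d - b) / b)| := by
        congr 1; field_simp; ring
    _ ≤ |(a - c) / b| + |c / d * ((d - b) / b)| := abs_add_le _ _
    _ = |a - c| / b + |c / d| * (|d - b| / b) := by
        rw [abs_mul, abs_div (a - c) b, abs_div (d - b) b, abs_of_pos hb₀]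
    _ ≤ ε / δ + 1 * (ε / δ) := by
        gcongr
    _ = 2 * ε / δ := by ring

lemma abs_integral_mul_le_integral {α : Type*} [MeasurableSpace α] {μ : Measure α}
    {f w : α → ℝ} (hw : Integrable w μ) (hw₀ : ∀ x, 0 ≤ w x) (hf : ∀ x, |f x| ≤ 1) :
    |∫ x, f x * w x ∂μ| ≤ ∫ x, w x ∂μ := by
  refine norm_integral_le_of_norm_le (f := fun x => f x * w x) hw (ae_of_all _ fun x => ?_)
  rw [Real.norm_eq_abs, abs_mul, abs_of_nonneg (hw₀ x)]
  exact mul_le_of_le_one_left (hw₀ x) (hf x)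

lemma abs_integral_mul_div_integral_sub_le {μ ν : Measure ℝ} [IsFiniteMeasure μ]
    [IsFiniteMeasure ν] {w f : ℝ → ℝ} (hw : Measurable w) (hw₀ : ∀ x, 0 ≤ w x) {W : ℝ}
    (hW : ∀ x, |w x| ≤ W) (hf : Measurable f) (hf₁ : ∀ x, |f x| ≤ 1) {δ : ℝ} (hδ : 0 < δ)
    (hμ : δ ≤ ∫ x, w x ∂μ) (hν : 0 < ∫ x, w x ∂ν) :
    |(∫ x, f x * w x ∂μ) / (∫ x, w x ∂μ) - (∫ x, f x * w x ∂ν) / (∫ x, w x ∂ν)|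
      ≤ 2 * (W * tvNorm μ ν) / δ := by
  have hfw : ∀ x, |f x * w x| ≤ W := fun x => by
    rw [abs_mul]
    exact mul_le_of_le_one_left (abs_nonneg _) (hf₁ x) |>.trans (hW x)
  refine abs_div_sub_div_le hδ hμ hν ?_ ?_ ?_
  · exact abs_integral_mul_le_integral
      (Integrable.of_bound hw.aestronglyMeasurable W (ae_of_all _ hW)) hw₀ hf₁
  · exact abs_integral_sub_le_mul_tvNorm μ ν (hf.mul hw) hfw
  · rw [tvNorm_comm]
    exact abs_integral_sub_le_mul_tvNorm ν μ hw hW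

theorem stmt_3_general (w : ℝ → ℝ) (hwcont : Continuous w) (hwnonneg : ∀ x, 0 ≤ w x)
    (hwbdd : ∃ C, ∀ x, |w x| ≤ C) (hwpos : 0 < supNorm w)
    (δ : ℝ) (hδ : 0 < δ) (ζ : ℝ)
    (Δ : ℝ) (hΔ : Δ = ζ * δ / (2 * supNorm w))
    (t₀ t₁ : ℝ)
    (μ η : ℝ → Measure ℝ)
    [∀ s, IsFiniteMeasure (μ s)] [∀ s, IsFiniteMeasure (η s)]
    (hμcont : ∀ s ∈ Set.Icc t₀ t₁, ∀ ε > (0:ℝ), ∃ ρ > (0:ℝ),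
      ∀ s' ∈ Set.Icc t₀ t₁, |s' - s| < ρ → tvNorm (μ s) (μ s') < ε)
    (hηcont : ∀ s ∈ Set.Icc t₀ t₁, ∀ ε > (0:ℝ), ∃ ρ > (0:ℝ),
      ∀ s' ∈ Set.Icc t₀ t₁, |s' - s| < ρ → tvNorm (η s) (η s') < ε)
    (hμw : ∀ s ∈ Set.Icc t₀ t₁, δ ≤ ∫ x, w x ∂(μ s))
    (hηw : ∀ s ∈ Set.Icc t₀ t₁, δ ≤ ∫ x, w x ∂(η s))
    (g' : ℝ → ℝ) (hg'cont : Continuous g')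
    (hg'le : ∀ x, |g' x| ≤ 1)
    (t : ℝ) (htmem : t ∈ Set.Icc t₀ (min t₁ (t₀ + Δ))) :
    |∫ s in t₀..t,
        ((∫ x, g' x * w x ∂(μ s)) / (∫ x, w x ∂(μ s))
          - (∫ x, g' x * w x ∂(η s)) / (∫ x, w x ∂(η s)))|
      ≤ ζ * ⨆ s : Set.Icc t₀ t₁, tvNorm (μ s) (η s) := by
  obtain ⟨ht₀t, htt₁Δ⟩ := htmem
  set M := ⨆ s : Set.Icc t₀ t₁, tvNorm (μ s) (η s)
  have hM : ∀ s ∈ Set.Icc t₀ t₁, tvNorm (μ s) (η s) ≤ M := by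
    have hbdd := isCompact_Icc.bddAbove_image (continuousOn_tvNorm hμcont hηcont)
    rw [Set.image_eq_range] at hbdd
    exact fun s hs => le_ciSup hbdd ⟨s, hs⟩
  have hM₀ : 0 ≤ M := Real.iSup_nonneg fun _ => tvNorm_nonneg _ _
  have hintegrand : ∀ s ∈ Set.uIoc t₀ t,
      ‖(∫ x, g' x * w x ∂(μ s)) / (∫ x, w x ∂(μ s))
        - (∫ x, g' x * w x ∂(η s)) / (∫ x, w x ∂(η s))‖ ≤ 2 * (supNorm w * M) / δ := by
    intro s hs
    rw [Set.uIoc_of_le ht₀t] at hs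
    have hs' : s ∈ Set.Icc t₀ t₁ := ⟨hs.1.le, hs.2.trans (htt₁Δ.trans (min_le_left _ _))⟩
    refine (abs_integral_mul_div_integral_sub_le hwcont.measurable hwnonneg
      (abs_le_supNorm hwbdd) hg'cont.measurable hg'le hδ (hμw s hs')
      (hδ.trans_le (hηw s hs'))).trans ?_
    gcongr
    exact hM s hs'
  calc _ ≤ 2 * (supNorm w * M) / δ * |t - t₀| :=
        intervalIntegral.norm_integral_le_of_norm_le_const hintegrand
    _ ≤ 2 * (supNorm w * M) / δ * Δ := by
        gcongr
        rw [abs_of_nonneg (sub_nonneg.2 ht₀t)]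
        linarith [htt₁Δ.trans (min_le_right _ _)]
    _ = ζ * M := by
        rw [hΔ]
        field_simp

/-- the contraction estimate for the Picard iteration map of the fluid
model of the weighted processor-sharing queue.  With `Δ = ζ δ / (2 ‖w‖_∞)` and two
total-variation-continuous measure-valued paths `μ, η` on `[t₀, t₁]` whose `w`-masses
stay above `δ`, the difference of the drift integrals up to any
`t ∈ [t₀, min(t₁, t₀ + Δ)]`, tested against any `C¹` function `g` with
`‖g‖_∞ ≤ 1` and `‖g'‖_∞ ≤ 1`, is at most `ζ · sup_{s ∈ [t₀,t₁]} ‖μ(s) − η(s)‖_TV`. -/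
theorem stmt_3 (w : ℝ → ℝ) (hwcont : Continuous w) (hwnonneg : ∀ x, 0 ≤ w x)
    (hwbdd : ∃ C, ∀ x, |w x| ≤ C) (hwpos : 0 < supNorm w)
    (δ : ℝ) (hδ : 0 < δ) (ζ : ℝ) (hζ0 : 0 < ζ) (hζ1 : ζ < 1)
    (Δ : ℝ) (hΔ : Δ = ζ * δ / (2 * supNorm w))
    (t₀ t₁ : ℝ) (ht : t₀ < t₁)
    (μ η : ℝ → Measure ℝ)
    [∀ s, IsFiniteMeasure (μ s)] [∀ s, IsFiniteMeasure (η s)]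
    (hμsupp : ∀ s ∈ Set.Icc t₀ t₁, μ s (Set.Iio 0) = 0)
    (hηsupp : ∀ s ∈ Set.Icc t₀ t₁, η s (Set.Iio 0) = 0)
    (hμcont : ∀ s ∈ Set.Icc t₀ t₁, ∀ ε > (0:ℝ), ∃ ρ > (0:ℝ),
      ∀ s' ∈ Set.Icc t₀ t₁, |s' - s| < ρ → tvNorm (μ s) (μ s') < ε)
    (hηcont : ∀ s ∈ Set.Icc t₀ t₁, ∀ ε > (0:ℝ), ∃ ρ > (0:ℝ),
      ∀ s' ∈ Set.Icc t₀ t₁, |s' - s| < ρ → tvNorm (η s) (η s') < ε)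
    (hμw : ∀ s ∈ Set.Icc t₀ t₁, δ ≤ ∫ x, w x ∂(μ s))
    (hηw : ∀ s ∈ Set.Icc t₀ t₁, δ ≤ ∫ x, w x ∂(η s))
    (g g' : ℝ → ℝ) (hg : ∀ x, HasDerivAt g (g' x) x) (hg'cont : Continuous g')
    (hgle : ∀ x, |g x| ≤ 1) (hg'le : ∀ x, |g' x| ≤ 1)
    (t : ℝ) (htmem : t ∈ Set.Icc t₀ (min t₁ (t₀ + Δ))) :
    |∫ s in t₀..t,
        ((∫ x, g' x * w x ∂(μ s)) / (∫ x, w x ∂(μ s))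
          - (∫ x, g' x * w x ∂(η s)) / (∫ x, w x ∂(η s)))|
      ≤ ζ * ⨆ s : Set.Icc t₀ t₁, tvNorm (μ s) (η s) :=
  stmt_3_general w hwcont hwnonneg hwbdd hwpos δ hδ ζ Δ hΔ t₀ t₁ μ η hμcont hηcont hμw hηw g'
    hg'cont hg'le t htmem
end

section
/- Let N ≥ 1, let w : [0,∞) → ℝ be continuously differentiable with w(0) = 0 and w'(x) > 0 for all x ≥ 0, let ν₁, …, ν_N > 0, and let R : [0, τ) → ℝ^N be a solution of Rⱼ'(t) = −w(Rⱼ(t))/Σ_{i=1}^N w(Rᵢ(t)), Rⱼ(0) = νⱼ, with Rⱼ(t) > 0 for all t ∈ [0, τ) and all j. If νᵢ ≤ νⱼ for some indices i, j, then Rᵢ(t) ≤ Rⱼ(t) for all t ∈ [0, τ): the ordering of remaining service amounts is preserved by the weighted processor-sharing dynamics. -/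
/-!
Write `D = Rⱼ − Rᵢ`. Then `D' = (w(Rᵢ) − w(Rⱼ)) / Σₖ w(Rₖ)`, and since `w` is monotone on
`[0, ∞)` with `w(0) = 0`, the denominator is nonnegative and `D' ≥ 0` wherever `D ≤ 0`.
A function with this property that starts nonnegative stays nonnegative, by a fencing
argument against the barriers `−ε(1 + t)`.
-/

open Set

/-- `IsWPSSol N w ν τ R` says that `R : [0, τ) → ℝ^N` solves the weighted
processor-sharing dynamics `Rⱼ'(t) = − w(Rⱼ(t)) / Σᵢ w(Rᵢ(t))` with initial condition
`Rⱼ(0) = νⱼ` and remains componentwise strictly positive on `[0, τ)`. -/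
def IsWPSSol (N : ℕ) (w : ℝ → ℝ) (ν : Fin N → ℝ) (τ : ℝ) (R : ℝ → Fin N → ℝ) : Prop :=
  (∀ j, R 0 j = ν j) ∧
  (∀ t ∈ Ico (0:ℝ) τ, ∀ j, 0 < R t j) ∧
  (∀ t ∈ Ico (0:ℝ) τ, ∀ j,
    HasDerivWithinAt (fun s => R s j)
      (-(w (R t j)) / ∑ i, w (R t i)) (Ico (0:ℝ) τ) t)

theorem image_nonneg_of_deriv_right_nonneg_of_nonpos {f f' : ℝ → ℝ} {a b : ℝ}
    (hf : ContinuousOn f (Icc a b)) (hf' : ∀ x ∈ Ico a b, HasDerivWithinAt f (f' x) (Ici x) x)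
    (ha : 0 ≤ f a) (hf'_nonneg : ∀ x ∈ Ico a b, f x ≤ 0 → 0 ≤ f' x) :
    ∀ ⦃x⦄, x ∈ Icc a b → 0 ≤ f x := by
  intro x hx
  have hfence : ∀ ε > 0, -f x ≤ ε * (1 + (x - a)) := fun ε hε =>
    image_le_of_deriv_right_lt_deriv_boundary (B := fun y => ε * (1 + (y - a)))
      (B' := fun _ => ε) hf.neg (fun y hy => (hf' y hy).neg)
      (by simp only [Pi.neg_apply, sub_self, add_zero, mul_one]; linarith)
      (fun y => by simpa using ((hasDerivAt_id y).sub_const a).const_add 1 |>.const_mul ε)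
      (fun y hy hyB => by
        rw [Pi.neg_apply] at hyB
        have hfy : f y ≤ 0 := by nlinarith [mul_nonneg hε.le (sub_nonneg.2 hy.1)]
        linarith [hf'_nonneg y hy hfy])
      hx
  by_contra! hneg
  have hlen : 0 < 1 + (x - a) := by linarith [hx.1]
  have := hfence (-f x / (2 * (1 + (x - a)))) (div_pos (by linarith) (by linarith))
  field_simp at this
  linarith

theorem image_nonneg_of_hasDerivWithinAt_Ico_of_nonpos {f f' : ℝ → ℝ} {a b : ℝ}
    (hf : ∀ x ∈ Ico a b, HasDerivWithinAt f (f' x) (Ico a b) x) (ha : 0 ≤ f a)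
    (hf'_nonneg : ∀ x ∈ Ico a b, f x ≤ 0 → 0 ≤ f' x) :
    ∀ x ∈ Ico a b, 0 ≤ f x := by
  intro x hx
  have hsub : Icc a x ⊆ Ico a b := Icc_subset_Ico_right hx.2
  refine image_nonneg_of_deriv_right_nonneg_of_nonpos (b := x) (f' := f') ?_ ?_ ha
    (fun y hy => hf'_nonneg y (hsub (Ico_subset_Icc_self hy))) ⟨hx.1, le_rfl⟩
  · exact fun y hy => (hf y (hsub hy)).continuousWithinAt.mono hsub
  · exact fun y hy => (hf y (hsub (Ico_subset_Icc_self hy))).mono_of_mem_nhdsWithin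
      (Ico_mem_nhdsGE_of_mem (hsub (Ico_subset_Icc_self hy)))

theorem stmt_8_general (N : ℕ) (w w' : ℝ → ℝ)
    (hw : ∀ x, HasDerivAt w (w' x) x)
    (hw0 : w 0 = 0) (hw'pos : ∀ x, 0 ≤ x → 0 < w' x)
    (ν : Fin N → ℝ)
    (τ : ℝ) (R : ℝ → Fin N → ℝ) (hR : IsWPSSol N w ν τ R)
    (i j : Fin N) (hij : ν i ≤ ν j) :
    ∀ t ∈ Ico (0:ℝ) τ, R t i ≤ R t j := by
  obtain ⟨hR0, hRpos, hRd⟩ := hR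
  have hmono : MonotoneOn w (Ici 0) :=
    monotoneOn_of_hasDerivWithinAt_nonneg (convex_Ici 0)
      (fun x _ => (hw x).continuousAt.continuousWithinAt)
      (fun x _ => (hw x).hasDerivWithinAt)
      (fun x hx => (hw'pos x (interior_subset hx)).le)
  have hw_nonneg : ∀ x, 0 < x → 0 ≤ w x := fun x hx =>
    hw0 ▸ hmono self_mem_Ici hx.le hx.le
  intro t ht
  refine sub_nonneg.1 (image_nonneg_of_hasDerivWithinAt_Ico_of_nonpos
    (f := fun s => R s j - R s i) (fun s hs => (hRd s hs j).sub (hRd s hs i))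
    (by simpa [hR0] using hij) ?_ t ht)
  intro s hs hji
  rw [neg_div, neg_div, neg_sub_neg, ← sub_div]
  exact div_nonneg (sub_nonneg.2 (hmono (hRpos s hs j).le (hRpos s hs i).le (sub_nonpos.1 hji)))
    (Finset.sum_nonneg fun k _ => hw_nonneg _ (hRpos s hs k))

/-- the weighted processor-sharing dynamics `Rⱼ' = −w(Rⱼ)/Σᵢ w(Rᵢ)`
preserve the initial ordering of the remaining service amounts: if `νᵢ ≤ νⱼ` then
`Rᵢ(t) ≤ Rⱼ(t)` for all `t ∈ [0, τ)`. -/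
theorem stmt_8 (N : ℕ) (hN : 1 ≤ N) (w w' : ℝ → ℝ)
    (hw : ∀ x, HasDerivAt w (w' x) x) (hw'cont : Continuous w')
    (hw0 : w 0 = 0) (hw'pos : ∀ x, 0 ≤ x → 0 < w' x)
    (ν : Fin N → ℝ) (hν : ∀ j, 0 < ν j)
    (τ : ℝ) (R : ℝ → Fin N → ℝ) (hR : IsWPSSol N w ν τ R)
    (i j : Fin N) (hij : ν i ≤ ν j) :
    ∀ t ∈ Ico (0:ℝ) τ, R t i ≤ R t j :=
  stmt_8_general N w w' hw hw0 hw'pos ν τ R hR i j hij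
end
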